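/- For integers s, t with 0 ≤ s, t ≤ n-1, the 3-cocycles Φ_s and Φ_t on ℤ_n are cohomologous (i.e., the pointwise quotient Φ_s/Φ_t is a 3-coboundary) if and only if s = t. In particular, Φ_s is a 3-coboundary if and only if s = 0. -/

import Mathlib

/-- The 3-cocycle `Φ_s` on the cyclic group `ℤ_n` (written additively via `ZMod n`,
where `g^i` corresponds to `(i : ZMod n)`), defined by
`Φ_s(g^i, g^j, g^k) = 𝕢^{s i (j+k-(j+k)')/n}` for `0 ≤ i,j,k ≤ n-1`,
where `i'` is the remainder of `i` modulo `n`. -/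
noncomputable def PhiCocycle (n s : ℕ) (q : ℂ) (x y z : ZMod n) : ℂ :=
  q ^ (s * x.val * ((y.val + z.val - (y.val + z.val) % n) / n))

/-- A function `φ : G × G × G → ℂ∖{0}` on the group `ℤ_n` is a 3-coboundary if there is
`f : G × G → ℂ∖{0}` with `φ(x,y,z) = f(y,z)·f(x,yz)·f(xy,z)⁻¹·f(x,y)⁻¹` for all `x,y,z`. -/
def IsThreeCoboundary (n : ℕ) (φ : ZMod n → ZMod n → ZMod n → ℂ) : Prop :=
  ∃ f : ZMod n → ZMod n → ℂ, (∀ x y, f x y ≠ 0) ∧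
    ∀ x y z, φ x y z = f y z * f x (y + z) * (f (x + y) z)⁻¹ * (f x y)⁻¹

/-!
The invariant is `φ ↦ ∏ y, φ 1 y 1`. It is multiplicative, and it is `1` on every coboundary
because each of the four factors `f y 1`, `f 1 (y + 1)`, `f (1 + y) 1`, `f 1 y` runs over a
translate of the whole group. On `Φ_s` the exponent is `s` times the carry of `y.val + 1`,
which is nonzero only for `y = -1`, so the invariant of `Φ_s` is `q ^ s`. As `q` is a primitive
`n`-th root of unity and `s, t < n`, `Φ_s / Φ_t` is a coboundary only if `s = t`.
-/

namespace IsThreeCoboundary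

variable {n : ℕ} [NeZero n] {φ : ZMod n → ZMod n → ZMod n → ℂ}

theorem prod_apply_eq_one (h : IsThreeCoboundary n φ) (x z : ZMod n) :
    ∏ y, φ x y z = 1 := by
  obtain ⟨f, hf, hφ⟩ := h
  have hshift₁ : ∏ y, f (x + y) z = ∏ y, f y z :=
    Fintype.prod_equiv (Equiv.addLeft x) _ _ fun _ => rfl
  have hshift₂ : ∏ y, f x (y + z) = ∏ y, f x y :=
    Fintype.prod_equiv (Equiv.addRight z) _ _ fun _ => rfl
  have h₁ : ∏ y, f y z ≠ 0 := Finset.prod_ne_zero_iff.mpr fun y _ => hf y z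
  have h₂ : ∏ y, f x y ≠ 0 := Finset.prod_ne_zero_iff.mpr fun y _ => hf x y
  simp only [hφ, Finset.prod_mul_distrib, Finset.prod_inv_distrib, hshift₁, hshift₂]
  field_simp

end IsThreeCoboundary

theorem isThreeCoboundary_one (n : ℕ) : IsThreeCoboundary n fun _ _ _ => 1 :=
  ⟨fun _ _ => 1, fun _ _ => one_ne_zero, fun _ _ _ => by simp⟩

section PhiCocycle

variable {n : ℕ} {q : ℂ}

theorem phiCocycle_eq_pow_carry (s : ℕ) (x y z : ZMod n) :
    PhiCocycle n s q x y z = q ^ (s * x.val * ((y.val + z.val) / n)) := by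
  rw [PhiCocycle, ← Nat.div_eq_sub_mod_div]

theorem phiCocycle_zero : PhiCocycle n 0 q = fun _ _ _ => 1 := by
  ext
  simp [PhiCocycle]

theorem phiCocycle_ne_zero (hq : q ≠ 0) (s : ℕ) (x y z : ZMod n) :
    PhiCocycle n s q x y z ≠ 0 :=
  pow_ne_zero _ hq

theorem prod_phiCocycle_one_one [hn : Fact (1 < n)] (s : ℕ) :
    ∏ y : ZMod n, PhiCocycle n s q 1 y 1 = q ^ s := by
  obtain ⟨m, rfl⟩ : ∃ m, n = m + 1 := ⟨n - 1, by have := hn.out; omega⟩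
  simp only [phiCocycle_eq_pow_carry, ZMod.val_one]
  rw [Finset.prod_eq_single (-1)]
  · simp [ZMod.val_neg_one, Nat.div_self]
  · intro y _ hy
    have hy' : y.val ≠ m := fun h => hy (ZMod.val_injective _ (by rw [h, ZMod.val_neg_one]))
    rw [Nat.div_eq_of_lt (by have := y.val_lt; omega), mul_zero, pow_zero]
  · simp

end PhiCocycle

theorem phiCocycle_div_isThreeCoboundary_iff {n : ℕ} [Fact (1 < n)] {q : ℂ}
    (hq : IsPrimitiveRoot q n) {s t : ℕ} (hs : s < n) (ht : t < n) :
    IsThreeCoboundary n (fun x y z => PhiCocycle n s q x y z / PhiCocycle n t q x y z) ↔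
      s = t := by
  have hq₀ : q ≠ 0 := hq.ne_zero (NeZero.ne n)
  constructor
  · intro h
    have hprod := h.prod_apply_eq_one 1 1
    rw [Finset.prod_div_distrib, prod_phiCocycle_one_one, prod_phiCocycle_one_one,
      div_eq_one_iff_eq (pow_ne_zero _ hq₀)] at hprod
    exact hq.pow_inj hs ht hprod
  · rintro rfl
    simp only [div_self (phiCocycle_ne_zero hq₀ _ _ _ _)]
    exact isThreeCoboundary_one n

/-- For `0 ≤ s,t ≤ n-1`, the 3-cocycles `Φ_s` and `Φ_t` are cohomologous (i.e. their
pointwise quotient is a 3-coboundary) iff `s = t`; in particular `Φ_s` is a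
3-coboundary iff `s = 0`. -/
theorem phiCocycle_cohomologous_iff
    (n : ℕ) (hn : 2 ≤ n) (q : ℂ) (hq : IsPrimitiveRoot q n)
    (s t : ℕ) (hs : s ≤ n - 1) (ht : t ≤ n - 1) :
    (IsThreeCoboundary n
        (fun x y z => PhiCocycle n s q x y z / PhiCocycle n t q x y z) ↔ s = t) ∧
    (IsThreeCoboundary n (PhiCocycle n s q) ↔ s = 0) := by
  have : Fact (1 < n) := ⟨hn⟩
  have hs' : s < n := by omega
  refine ⟨phiCocycle_div_isThreeCoboundary_iff hq hs' (by omega), ?_⟩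
  simpa only [phiCocycle_zero, div_one] using
    phiCocycle_div_isThreeCoboundary_iff hq hs' (by omega : 0 < n)
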